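/- Let d ≥ 1 and let ρ be a density matrix on ℂ^d. Then ρ attains the maximum value of every valid coherence measure (i.e., for every valid coherence measure C and every density matrix σ on ℂ^d, C(σ) ≤ C(ρ)) if and only if ρ belongs to S_MCS. In other words, S_MCS is exactly the intersection over all valid coherence measures C of the set of maximizers of C. -/

import Mathlib

open Matrix BigOperators
open scoped ComplexOrder

noncomputable section

/-- A density matrix on ℂ^d: positive semidefinite with trace 1. -/
def IsDensityMatrix {d : ℕ} (ρ : Matrix (Fin d) (Fin d) ℂ) : Prop :=
  ρ.PosSemidef ∧ ρ.trace = 1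

/-- An incoherent Kraus family: completeness relation plus each Kraus operator
maps diagonal density matrices to diagonal matrices. -/
def IsIncoherentKraus {d : ℕ} {ι : Type} [Fintype ι]
    (K : ι → Matrix (Fin d) (Fin d) ℂ) : Prop :=
  (∑ n, (K n)ᴴ * K n = 1) ∧
  ∀ D : Matrix (Fin d) (Fin d) ℂ, IsDensityMatrix D → D.IsDiag →
    ∀ n, ((K n) * D * (K n)ᴴ).IsDiag

/-- A unitary incoherent matrix: unitary and U D Uᴴ diagonal for every diagonal
density matrix D. -/
def IsUnitaryIncoherent {d : ℕ} (U : Matrix (Fin d) (Fin d) ℂ) : Prop :=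
  U * Uᴴ = 1 ∧ Uᴴ * U = 1 ∧
  ∀ D : Matrix (Fin d) (Fin d) ℂ, IsDensityMatrix D → D.IsDiag → (U * D * Uᴴ).IsDiag

/-- S_MCS: rank-one projections onto unit vectors whose coordinates all have
modulus 1/√d. -/
def InSMCS {d : ℕ} (ρ : Matrix (Fin d) (Fin d) ℂ) : Prop :=
  ∃ ψ : Fin d → ℂ, (∑ j, ‖ψ j‖ ^ 2 = 1) ∧
    (∀ j, ‖ψ j‖ = 1 / Real.sqrt d) ∧
    ρ = Matrix.vecMulVec ψ (star ψ)

/-- A valid coherence measure: (C1) nonnegativity and vanishing exactly on diagonal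
(incoherent) states; (C2) monotonicity under incoherent operations; (C3) monotonicity
on average under subselection; (C4) convexity. -/
def IsValidCoherenceMeasure {d : ℕ} (C : Matrix (Fin d) (Fin d) ℂ → ℝ) : Prop :=
  (∀ ρ, IsDensityMatrix ρ → 0 ≤ C ρ) ∧
  (∀ ρ, IsDensityMatrix ρ → (C ρ = 0 ↔ ρ.IsDiag)) ∧
  (∀ ρ, IsDensityMatrix ρ → ∀ (N : ℕ) (K : Fin N → Matrix (Fin d) (Fin d) ℂ),
    IsIncoherentKraus K → C (∑ n, K n * ρ * (K n)ᴴ) ≤ C ρ) ∧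
  (∀ ρ, IsDensityMatrix ρ → ∀ (N : ℕ) (K : Fin N → Matrix (Fin d) (Fin d) ℂ),
    IsIncoherentKraus K →
    ∑ n ∈ Finset.univ.filter
        (fun n => 0 < (Matrix.trace (K n * ρ * (K n)ᴴ)).re),
      (Matrix.trace (K n * ρ * (K n)ᴴ)).re *
        C ((((Matrix.trace (K n * ρ * (K n)ᴴ)).re : ℂ))⁻¹ • (K n * ρ * (K n)ᴴ)) ≤ C ρ) ∧
  (∀ (M : ℕ) (q : Fin M → ℝ) (ρs : Fin M → Matrix (Fin d) (Fin d) ℂ),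
    (∀ k, 0 ≤ q k) → (∑ k, q k = 1) → (∀ k, IsDensityMatrix (ρs k)) →
    C (∑ k, (q k : ℂ) • ρs k) ≤ ∑ k, q k * C (ρs k))

/-!
The `l₁`-norm of coherence `C(ρ) = ∑_{i ≠ j} |ρ i j|` is a valid coherence measure: an incoherent
Kraus operator has at most one nonzero entry in each column, and Cauchy–Schwarz on the column
norms gives (C2) and (C3). Writing a state as a Gram matrix `ρ i j = ⟪b i, b j⟫` with
`∑ ‖b i‖² = 1`, the bound `|⟪b i, b j⟫| ≤ ‖b i‖ ‖b j‖ ≤ (‖b i‖² + ‖b j‖²) / 2` gives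
`C(ρ) ≤ d - 1`, with equality exactly when all `‖b i‖ = 1/√d` and all `b i` are collinear, i.e.
when `ρ ∈ S_MCS`. The states of `S_MCS` attain `d - 1`, so a common maximizer lies in `S_MCS`.

Conversely, write a state of `S_MCS` as `ωωᴴ/d` with `|ω k| = 1`, and a state `σ` as `∑ₘ vₘvₘᴴ`.
The operators `K_{m,n} e_k = conj (ω k) · vₘ (k - n) · e_{k - n}`, `n` running over the cyclic
shifts of `Fin d`, form an incoherent Kraus family with `K_{m,n} ω = vₘ`; hence they map `ωωᴴ/d`
to `σ`, and (C2) makes `ωωᴴ/d` a maximizer of every valid measure.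
-/

open Finset
open scoped InnerProductSpace

section OffDiag

variable {ι : Type*} [Fintype ι] [DecidableEq ι]

lemma Finset.sum_offDiag_eq_sum_sub_sum_diag {M : Type*} [AddCommGroup M] (f : ι → ι → M) :
    ∑ p ∈ univ.offDiag, f p.1 p.2 = ∑ i, ∑ j, f i j - ∑ i, f i i := by
  rw [eq_sub_iff_add_eq, ← sum_diag univ (fun p => f p.1 p.2), add_comm,
    ← sum_union (disjoint_diag_offDiag _), diag_union_offDiag, sum_product]

lemma Finset.sum_offDiag_add_div_two (x : ι → ℝ) :
    ∑ p ∈ univ.offDiag, (x p.1 + x p.2) / 2 = (Fintype.card ι - 1) * ∑ i, x i := by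
  rw [sum_offDiag_eq_sum_sub_sum_diag (fun i j => (x i + x j) / 2)]
  simp only [← sum_div, sum_add_distrib, sum_const, card_univ, nsmul_eq_mul, ← mul_sum]
  ring

end OffDiag

section L1Coherence

variable {ι : Type*} [Fintype ι]

def l1Coherence (τ : Matrix ι ι ℂ) : ℝ :=
  ∑ p ∈ univ.offDiag, ‖τ p.1 p.2‖

lemma l1Coherence_nonneg (τ : Matrix ι ι ℂ) : 0 ≤ l1Coherence τ :=
  sum_nonneg fun _ _ => norm_nonneg _

lemma l1Coherence_eq_zero_iff {τ : Matrix ι ι ℂ} : l1Coherence τ = 0 ↔ τ.IsDiag := by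
  simp [l1Coherence, sum_eq_zero_iff_of_nonneg, Matrix.IsDiag, Pairwise]

lemma l1Coherence_sum_le {κ : Type*} [Fintype κ] (τ : κ → Matrix ι ι ℂ) :
    l1Coherence (∑ n, τ n) ≤ ∑ n, l1Coherence (τ n) := by
  simp only [l1Coherence, Matrix.sum_apply]
  rw [sum_comm]
  exact sum_le_sum fun p _ => norm_sum_le _ _

lemma l1Coherence_smul (c : ℂ) (τ : Matrix ι ι ℂ) :
    l1Coherence (c • τ) = ‖c‖ * l1Coherence τ := by
  simp [l1Coherence, mul_sum]

end L1Coherence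

section IncoherentOperators

variable {m : Type*} [Fintype m]

lemma Matrix.mul_mul_conjTranspose_apply (K ρ : Matrix m m ℂ) (i j : m) :
    (K * ρ * Kᴴ) i j = ∑ a, ∑ b, K i a * ρ a b * star (K j b) := by
  simp only [Matrix.mul_apply, Matrix.conjTranspose_apply, sum_mul]
  exact sum_comm

lemma Matrix.isDiag_mul_mul_conjTranspose {K D : Matrix m m ℂ}
    (hK : ∀ a i j, i ≠ j → K i a * star (K j a) = 0) (hD : D.IsDiag) :
    (K * D * Kᴴ).IsDiag := by
  intro i j hij
  rw [Matrix.mul_mul_conjTranspose_apply]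
  refine sum_eq_zero fun a _ => sum_eq_zero fun b _ => ?_
  obtain rfl | hab := eq_or_ne a b
  · rw [mul_right_comm, hK a i j hij, zero_mul]
  · rw [hD hab, mul_zero, zero_mul]

lemma Matrix.norm_mul_mul_conjTranspose_apply_le {K : Matrix m m ℂ}
    (hK : ∀ a i j, i ≠ j → K i a * star (K j a) = 0) (ρ : Matrix m m ℂ) {i j : m}
    (hij : i ≠ j) :
    ‖(K * ρ * Kᴴ) i j‖ ≤ ∑ q ∈ univ.offDiag, ‖K i q.1‖ * ‖ρ q.1 q.2‖ * ‖K j q.2‖ := by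
  have hdiag : ∀ q ∈ univ, q ∉ univ.offDiag →
      K i q.1 * ρ q.1 q.2 * star (K j q.2) = 0 := by
    rintro ⟨a, b⟩ - hq
    obtain rfl : a = b := by simpa using hq
    rw [mul_right_comm, hK a i j hij, zero_mul]
  rw [Matrix.mul_mul_conjTranspose_apply, ← Fintype.sum_prod_type',
    ← sum_subset (subset_univ _) hdiag]
  refine (norm_sum_le _ _).trans_eq (sum_congr rfl fun q _ => ?_)
  rw [norm_mul, norm_mul, norm_star]

lemma Matrix.l1Coherence_mul_mul_conjTranspose_le {K : Matrix m m ℂ}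
    (hK : ∀ a i j, i ≠ j → K i a * star (K j a) = 0) (ρ : Matrix m m ℂ) :
    l1Coherence (K * ρ * Kᴴ) ≤
      ∑ q ∈ univ.offDiag, ‖ρ q.1 q.2‖ * ((∑ i, ‖K i q.1‖) * ∑ j, ‖K j q.2‖) := by
  calc l1Coherence (K * ρ * Kᴴ)
      ≤ ∑ p ∈ univ.offDiag, ∑ q ∈ univ.offDiag, ‖K p.1 q.1‖ * ‖ρ q.1 q.2‖ * ‖K p.2 q.2‖ :=
        sum_le_sum fun p hp =>
          norm_mul_mul_conjTranspose_apply_le hK ρ (mem_offDiag.mp hp).2.2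
    _ ≤ ∑ p : m × m, ∑ q ∈ univ.offDiag, ‖K p.1 q.1‖ * ‖ρ q.1 q.2‖ * ‖K p.2 q.2‖ :=
        sum_le_sum_of_subset_of_nonneg (subset_univ _) fun _ _ _ =>
          sum_nonneg fun _ _ => by positivity
    _ = _ := by
        rw [sum_comm]
        refine sum_congr rfl fun q _ => ?_
        rw [Fintype.sum_prod_type, sum_mul_sum, mul_sum]
        refine sum_congr rfl fun i _ => ?_
        rw [mul_sum]
        exact sum_congr rfl fun j _ => by ring

end IncoherentOperators

section IncoherentKraus

variable {d : ℕ} {ι : Type} [Fintype ι] {K : ι → Matrix (Fin d) (Fin d) ℂ}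

lemma isDensityMatrix_diagonal_single (a : Fin d) :
    IsDensityMatrix (Matrix.diagonal (Pi.single a 1)) := by
  refine ⟨Matrix.posSemidef_diagonal_iff.2 fun k => ?_, by simp [Matrix.trace_diagonal]⟩
  rcases eq_or_ne k a with rfl | hk <;> simp [*]

lemma IsIncoherentKraus.mul_star_eq_zero (hK : IsIncoherentKraus K) (n : ι) :
    ∀ a i j, i ≠ j → K n i a * star (K n j a) = 0 := by
  intro a i j hij
  have h := hK.2 _ (isDensityMatrix_diagonal_single a) (Matrix.isDiag_diagonal _) n hij
  rw [← h, Matrix.mul_apply]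
  simp [Matrix.mul_diagonal, Pi.single_apply]

lemma IsIncoherentKraus.sum_sq_sum_norm_col (hK : IsIncoherentKraus K) (a : Fin d) :
    ∑ n, (∑ i, ‖K n i a‖) ^ 2 = 1 := by
  have hcol (n : ι) : (∑ i, ‖K n i a‖) ^ 2 = ∑ i, ‖K n i a‖ ^ 2 := by
    rw [sq, sum_mul_sum]
    refine sum_congr rfl fun i _ => ?_
    rw [sum_eq_single i (fun j _ hji => ?_) (by simp), sq]
    rw [← norm_star (K n j a), ← norm_mul, hK.mul_star_eq_zero n a i j hji.symm, norm_zero]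
  have hdiag := congrArg (fun M => (M a a).re) hK.1
  simp only [Matrix.sum_apply, Matrix.mul_apply, Matrix.conjTranspose_apply, Complex.re_sum,
    Complex.star_def, Complex.conj_mul', Matrix.one_apply_eq, Complex.one_re] at hdiag
  simp only [hcol]
  exact_mod_cast hdiag

lemma IsIncoherentKraus.sum_mul_sum_norm_col_le_one (hK : IsIncoherentKraus K) (a b : Fin d) :
    ∑ n, (∑ i, ‖K n i a‖) * ∑ i, ‖K n i b‖ ≤ 1 := by
  refine (Real.sum_mul_le_sqrt_mul_sqrt _ _ _).trans_eq ?_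
  rw [hK.sum_sq_sum_norm_col, hK.sum_sq_sum_norm_col, Real.sqrt_one, one_mul]

lemma IsIncoherentKraus.sum_l1Coherence_le (hK : IsIncoherentKraus K)
    (ρ : Matrix (Fin d) (Fin d) ℂ) :
    ∑ n, l1Coherence (K n * ρ * (K n)ᴴ) ≤ l1Coherence ρ :=
  calc ∑ n, l1Coherence (K n * ρ * (K n)ᴴ)
      ≤ ∑ n, ∑ q ∈ univ.offDiag,
          ‖ρ q.1 q.2‖ * ((∑ i, ‖K n i q.1‖) * ∑ j, ‖K n j q.2‖) :=
        sum_le_sum fun n _ => Matrix.l1Coherence_mul_mul_conjTranspose_le (hK.mul_star_eq_zero n) ρ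
    _ = ∑ q ∈ univ.offDiag,
          ‖ρ q.1 q.2‖ * ∑ n, (∑ i, ‖K n i q.1‖) * ∑ j, ‖K n j q.2‖ := by
        rw [sum_comm]
        simp only [mul_sum]
    _ ≤ l1Coherence ρ :=
        sum_le_sum fun q _ =>
          mul_le_of_le_one_right (norm_nonneg _) (hK.sum_mul_sum_norm_col_le_one q.1 q.2)

end IncoherentKraus

lemma isValidCoherenceMeasure_l1Coherence {d : ℕ} :
    IsValidCoherenceMeasure (l1Coherence (ι := Fin d)) := by
  refine ⟨fun ρ _ => l1Coherence_nonneg ρ, fun ρ _ => l1Coherence_eq_zero_iff,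
    fun ρ _ N K hK => (l1Coherence_sum_le _).trans (hK.sum_l1Coherence_le ρ),
    fun ρ _ N K hK => ?_, fun M q ρs hq _ _ => ?_⟩
  · calc _ = ∑ n ∈ univ with 0 < (K n * ρ * (K n)ᴴ).trace.re, l1Coherence (K n * ρ * (K n)ᴴ) :=
          sum_congr rfl fun n hn => by
            have hp := (mem_filter.mp hn).2
            rw [l1Coherence_smul, norm_inv, Complex.norm_real, Real.norm_of_nonneg hp.le,
              mul_inv_cancel_left₀ hp.ne']
      _ ≤ ∑ n, l1Coherence (K n * ρ * (K n)ᴴ) :=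
          sum_le_sum_of_subset_of_nonneg (filter_subset _ _) fun n _ _ => l1Coherence_nonneg _
      _ ≤ l1Coherence ρ := hK.sum_l1Coherence_le ρ
  · refine (l1Coherence_sum_le _).trans_eq (sum_congr rfl fun k _ => ?_)
    rw [l1Coherence_smul, Complex.norm_real, Real.norm_of_nonneg (hq k)]

section Gram

variable {𝕜 E : Type*} [RCLike 𝕜] [NormedAddCommGroup E] [InnerProductSpace 𝕜 E]

lemma Matrix.PosSemidef.exists_eq_gram {n : Type*} [Fintype n] {M : Matrix n n 𝕜}
    (hM : M.PosSemidef) : ∃ (m : ℕ) (b : n → EuclideanSpace 𝕜 (Fin m)), M = Matrix.gram 𝕜 b := by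
  obtain ⟨m, v, rfl⟩ := Matrix.posSemidef_iff_eq_sum_vecMulVec.1 hM
  refine ⟨m, fun j => WithLp.toLp 2 fun i => star (v i j), ?_⟩
  ext j k
  simp [Matrix.sum_apply, Matrix.vecMulVec_apply, PiLp.inner_apply, mul_comm]

lemma Matrix.trace_gram {n : Type*} [Fintype n] (b : n → E) :
    (Matrix.gram 𝕜 b).trace = ∑ i, (‖b i‖ : 𝕜) ^ 2 := by
  simp [Matrix.trace, inner_self_eq_norm_sq_to_K]

lemma norm_inner_le_add_sq_div_two (x y : E) : ‖⟪x, y⟫_𝕜‖ ≤ (‖x‖ ^ 2 + ‖y‖ ^ 2) / 2 :=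
  (norm_inner_le_norm x y).trans (by nlinarith [sq_nonneg (‖x‖ - ‖y‖)])

lemma norm_eq_and_norm_inner_eq_of_norm_inner_eq_add_sq_div_two {x y : E}
    (h : ‖⟪x, y⟫_𝕜‖ = (‖x‖ ^ 2 + ‖y‖ ^ 2) / 2) : ‖x‖ = ‖y‖ ∧ ‖⟪x, y⟫_𝕜‖ = ‖x‖ * ‖y‖ := by
  have hCS := norm_inner_le_norm (𝕜 := 𝕜) x y
  have hxy : ‖x‖ = ‖y‖ := by nlinarith [sq_nonneg (‖x‖ - ‖y‖)]
  refine ⟨hxy, ?_⟩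
  rw [h, hxy]
  ring

variable {ι : Type*} [Fintype ι] [DecidableEq ι]

lemma sum_offDiag_norm_inner_le (b : ι → E) :
    ∑ p ∈ univ.offDiag, ‖⟪b p.1, b p.2⟫_𝕜‖ ≤ (Fintype.card ι - 1) * ∑ i, ‖b i‖ ^ 2 := by
  rw [← sum_offDiag_add_div_two]
  exact sum_le_sum fun p _ => norm_inner_le_add_sq_div_two _ _

lemma norm_inner_eq_of_sum_offDiag_norm_inner_eq {b : ι → E}
    (h : ∑ p ∈ univ.offDiag, ‖⟪b p.1, b p.2⟫_𝕜‖ = (Fintype.card ι - 1) * ∑ i, ‖b i‖ ^ 2)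
    (i j : ι) : ‖b i‖ = ‖b j‖ ∧ ‖⟪b i, b j⟫_𝕜‖ = ‖b i‖ * ‖b j‖ := by
  obtain rfl | hij := eq_or_ne i j
  · simp [inner_self_eq_norm_sq_to_K, sq]
  rw [← sum_offDiag_add_div_two, sum_eq_sum_iff_of_le
    fun p _ => norm_inner_le_add_sq_div_two (b p.1) (b p.2)] at h
  exact norm_eq_and_norm_inner_eq_of_norm_inner_eq_add_sq_div_two (h (i, j) (by simpa using hij))

lemma exists_gram_eq_vecMulVec_of_norm_inner_eq {ι : Type*} {b : ι → E} {x : E} (hx : x ≠ 0)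
    (h : ∀ i, ‖⟪x, b i⟫_𝕜‖ = ‖x‖ * ‖b i‖) :
    ∃ ψ : ι → 𝕜, (∀ i, ‖ψ i‖ = ‖b i‖) ∧ Matrix.gram 𝕜 b = Matrix.vecMulVec ψ (star ψ) := by
  have hcol (i : ι) : ∃ c : 𝕜, b i = c • x :=
    Or.resolve_left (((norm_inner_eq_norm_tfae 𝕜 x (b i)).out 0 2).1 (h i)) hx
  choose c hc using hcol
  refine ⟨fun i => star (c i) * ‖x‖, fun i => by simp [hc, norm_smul], ?_⟩
  ext i j
  simp [hc, Matrix.vecMulVec_apply, inner_smul_left, inner_smul_right,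
    inner_self_eq_norm_sq_to_K]
  ring

end Gram

lemma Matrix.trace_vecMulVec_star {n : Type*} [Fintype n] (x : n → ℂ) :
    (Matrix.vecMulVec x (star x)).trace = ((∑ i, ‖x i‖ ^ 2 : ℝ) : ℂ) := by
  simp [Matrix.trace_vecMulVec, dotProduct, Complex.mul_conj']

section MaximallyCoherent

variable {d : ℕ} {ρ : Matrix (Fin d) (Fin d) ℂ}

lemma IsDensityMatrix.neZero (hρ : IsDensityMatrix ρ) : NeZero d :=
  ⟨by rintro rfl; simpa [Matrix.trace] using hρ.2⟩

lemma IsDensityMatrix.exists_eq_gram (hρ : IsDensityMatrix ρ) :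
    ∃ (m : ℕ) (b : Fin d → EuclideanSpace ℂ (Fin m)),
      ρ = Matrix.gram ℂ b ∧ ∑ i, ‖b i‖ ^ 2 = 1 := by
  obtain ⟨m, b, rfl⟩ := hρ.1.exists_eq_gram
  refine ⟨m, b, rfl, ?_⟩
  have h : ∑ i, ((‖b i‖ : ℝ) : ℂ) ^ 2 = 1 := (Matrix.trace_gram b).symm.trans hρ.2
  exact_mod_cast h

lemma InSMCS.isDensityMatrix (hρ : InSMCS ρ) : IsDensityMatrix ρ := by
  obtain ⟨ψ, hψ, -, rfl⟩ := hρ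
  refine ⟨Matrix.posSemidef_vecMulVec_self_star ψ, ?_⟩
  rw [Matrix.trace_vecMulVec_star, hψ, Complex.ofReal_one]

lemma inSMCS_vecMulVec [NeZero d] {ψ : Fin d → ℂ} (hψ : ∀ j, ‖ψ j‖ = 1 / √d) :
    InSMCS (Matrix.vecMulVec ψ (star ψ)) := by
  refine ⟨ψ, ?_, hψ, rfl⟩
  simp [hψ, NeZero.ne d]

lemma exists_inSMCS [NeZero d] : ∃ σ : Matrix (Fin d) (Fin d) ℂ, InSMCS σ :=
  ⟨_, inSMCS_vecMulVec (ψ := fun _ => ((1 / √d : ℝ) : ℂ)) fun _ => by simp⟩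

lemma InSMCS.l1Coherence_eq (hρ : InSMCS ρ) : l1Coherence ρ = d - 1 := by
  have : NeZero d := hρ.isDensityMatrix.neZero
  obtain ⟨ψ, -, hψ, rfl⟩ := hρ
  have hentry (i j : Fin d) : ‖Matrix.vecMulVec ψ (star ψ) i j‖ = 1 / d := by
    simp [Matrix.vecMulVec_apply, hψ, ← mul_inv, Real.mul_self_sqrt (Nat.cast_nonneg _)]
  rw [l1Coherence, sum_offDiag_eq_sum_sub_sum_diag (fun i j => ‖Matrix.vecMulVec ψ (star ψ) i j‖)]
  simp only [hentry, sum_const, card_univ, Fintype.card_fin, nsmul_eq_mul]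
  field_simp [NeZero.ne d]

lemma l1Coherence_gram {m : Type*} [Fintype m] {E : Type*} [NormedAddCommGroup E]
    [InnerProductSpace ℂ E] (b : m → E) :
    l1Coherence (Matrix.gram ℂ b) = ∑ p ∈ univ.offDiag, ‖⟪b p.1, b p.2⟫_ℂ‖ :=
  rfl

lemma IsDensityMatrix.l1Coherence_le (hρ : IsDensityMatrix ρ) : l1Coherence ρ ≤ d - 1 := by
  obtain ⟨m, b, rfl, hb⟩ := hρ.exists_eq_gram
  simpa [l1Coherence_gram, hb] using sum_offDiag_norm_inner_le (𝕜 := ℂ) b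

lemma IsDensityMatrix.inSMCS_of_l1Coherence_eq (hρ : IsDensityMatrix ρ)
    (h : l1Coherence ρ = d - 1) : InSMCS ρ := by
  have : NeZero d := hρ.neZero
  obtain ⟨m, b, rfl, hb⟩ := hρ.exists_eq_gram
  have hcs := norm_inner_eq_of_sum_offDiag_norm_inner_eq (𝕜 := ℂ) (b := b)
    (by simpa [l1Coherence_gram, hb] using h)
  have hnorm (i : Fin d) : ‖b i‖ = 1 / √d := by
    have hsum : ‖b i‖ ^ 2 * d = 1 := by
      rw [← hb, mul_comm]
      simp [fun j => (hcs j i).1]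
    refine (pow_left_inj₀ (norm_nonneg _) (by positivity) two_ne_zero).1 ?_
    rw [div_pow, one_pow, Real.sq_sqrt (Nat.cast_nonneg d), eq_div_iff (NeZero.ne _), hsum]
  have hx : b 0 ≠ 0 := norm_ne_zero_iff.1 (by simp [hnorm, NeZero.ne d])
  obtain ⟨ψ, hψ, hgram⟩ := exists_gram_eq_vecMulVec_of_norm_inner_eq hx fun i => (hcs 0 i).2
  rw [hgram]
  exact inSMCS_vecMulVec fun i => (hψ i).trans (hnorm i)

end MaximallyCoherent

section ShiftKraus

lemma Matrix.mul_vecMulVec_star_mul_conjTranspose {m n : Type*} [Fintype n] [Fintype m]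
    (A : Matrix m n ℂ) (x : n → ℂ) :
    A * Matrix.vecMulVec x (star x) * Aᴴ = Matrix.vecMulVec (A *ᵥ x) (star (A *ᵥ x)) := by
  rw [Matrix.mul_vecMulVec, Matrix.vecMulVec_mul, Matrix.star_mulVec]

variable {d : ℕ} {ω : Fin d → ℂ} (φ : Fin d → ℂ) (n : Fin d)

variable (ω) in
def shiftKraus : Matrix (Fin d) (Fin d) ℂ :=
  Matrix.of fun i k => if k = i + n then φ i * star (ω k) else 0

variable (ω) in
lemma shiftKraus_mul_star_eq_zero :
    ∀ a i j, i ≠ j → shiftKraus ω φ n i a * star (shiftKraus ω φ n j a) = 0 := by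
  intro a i j hij
  by_cases hi : a = i + n
  · have hj : a ≠ j + n := fun hj => hij (add_right_cancel (hi.symm.trans hj))
    simp [shiftKraus, hj]
  · simp [shiftKraus, hi]

lemma conjTranspose_mul_shiftKraus [NeZero d] (hω : ∀ k, ‖ω k‖ = 1) :
    (shiftKraus ω φ n)ᴴ * shiftKraus ω φ n =
      Matrix.diagonal fun k => ((‖φ (k - n)‖ ^ 2 : ℝ) : ℂ) := by
  ext k k'
  rw [Matrix.mul_apply, sum_eq_single (k - n)]
  · by_cases hk : k = k'
    · subst hk
      simp only [shiftKraus, Matrix.conjTranspose_apply, Matrix.of_apply, sub_add_cancel,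
        if_true, star_mul', star_star, Matrix.diagonal_apply_eq]
      rw [mul_mul_mul_comm, RCLike.star_def, Complex.conj_mul', Complex.mul_conj', hω]
      simp
    · simp [shiftKraus, hk, sub_add_cancel, eq_comm (a := k')]
  · intro i _ hi
    have : k ≠ i + n := fun h => hi (eq_sub_of_add_eq h.symm)
    simp [shiftKraus, this]
  · simp

lemma sum_conjTranspose_mul_shiftKraus [NeZero d] (hω : ∀ k, ‖ω k‖ = 1) :
    ∑ n, (shiftKraus ω φ n)ᴴ * shiftKraus ω φ n = ((∑ i, ‖φ i‖ ^ 2 : ℝ) : ℂ) • 1 := by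
  ext k k'
  simp only [conjTranspose_mul_shiftKraus φ _ hω, Matrix.sum_apply, Matrix.diagonal_apply,
    Matrix.smul_apply, Matrix.one_apply, smul_eq_mul, mul_ite, mul_one, mul_zero]
  split_ifs
  · have h := (Equiv.subLeft k).sum_comp fun i => ‖φ i‖ ^ 2
    exact_mod_cast h
  · simp

lemma shiftKraus_mulVec_self (hω : ∀ k, ‖ω k‖ = 1) : shiftKraus ω φ n *ᵥ ω = φ := by
  ext i
  simp [shiftKraus, Matrix.mulVec, dotProduct, mul_assoc, Complex.conj_mul', hω]

lemma sum_shiftKraus_mul_vecMulVec_mul_conjTranspose (hω : ∀ k, ‖ω k‖ = 1) :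
    ∑ n, shiftKraus ω φ n * Matrix.vecMulVec ω (star ω) * (shiftKraus ω φ n)ᴴ =
      (d : ℂ) • Matrix.vecMulVec φ (star φ) := by
  simp only [Matrix.mul_vecMulVec_star_mul_conjTranspose, shiftKraus_mulVec_self _ _ hω, sum_const,
    card_univ, Fintype.card_fin, Nat.cast_smul_eq_nsmul]

end ShiftKraus

lemma IsValidCoherenceMeasure.apply_le_of_isIncoherentKraus {d : ℕ}
    {C : Matrix (Fin d) (Fin d) ℂ → ℝ} (hC : IsValidCoherenceMeasure C)
    {ρ : Matrix (Fin d) (Fin d) ℂ} (hρ : IsDensityMatrix ρ) {ι : Type} [Fintype ι]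
    {K : ι → Matrix (Fin d) (Fin d) ℂ} (hK : IsIncoherentKraus K) :
    C (∑ n, K n * ρ * (K n)ᴴ) ≤ C ρ := by
  let e := Fintype.equivFin ι
  have hK' : IsIncoherentKraus (K ∘ e.symm) :=
    ⟨(e.symm.sum_comp fun n => (K n)ᴴ * K n).trans hK.1, fun D hD hDd n => hK.2 D hD hDd _⟩
  simpa only [Function.comp_apply, e.symm.sum_comp fun n => K n * ρ * (K n)ᴴ]
    using hC.2.2.1 ρ hρ _ _ hK'

lemma InSMCS.exists_eq_smul_vecMulVec {d : ℕ} {ρ : Matrix (Fin d) (Fin d) ℂ} (hρ : InSMCS ρ) :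
    ∃ ω : Fin d → ℂ, (∀ k, ‖ω k‖ = 1) ∧ ρ = (d : ℂ)⁻¹ • Matrix.vecMulVec ω (star ω) := by
  have : NeZero d := hρ.isDensityMatrix.neZero
  have hd : 0 < √(d : ℝ) := Real.sqrt_pos.2 (by simp [Nat.pos_of_neZero])
  obtain ⟨ψ, -, hψ, rfl⟩ := hρ
  refine ⟨fun k => (√d : ℂ) * ψ k, fun k => by simp [hψ, abs_of_pos hd, hd.ne'], ?_⟩
  have hsq : ((√d : ℝ) : ℂ) * (√d : ℝ) = d := by
    rw [← Complex.ofReal_mul, Real.mul_self_sqrt (Nat.cast_nonneg _), Complex.ofReal_natCast]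
  ext i j
  simp only [Matrix.smul_apply, Matrix.vecMulVec_apply, Pi.star_apply, star_mul', smul_eq_mul,
    Complex.star_def, Complex.conj_ofReal]
  rw [mul_mul_mul_comm, ← mul_assoc, hsq, inv_mul_cancel₀ (by simp [NeZero.ne d]), one_mul]

lemma InSMCS.exists_isIncoherentKraus {d : ℕ} {ρ σ : Matrix (Fin d) (Fin d) ℂ} (hρ : InSMCS ρ)
    (hσ : IsDensityMatrix σ) :
    ∃ (m : ℕ) (K : Fin m × Fin d → Matrix (Fin d) (Fin d) ℂ),
      IsIncoherentKraus K ∧ ∑ p, K p * ρ * (K p)ᴴ = σ := by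
  have : NeZero d := hσ.neZero
  obtain ⟨ω, hω, rfl⟩ := hρ.exists_eq_smul_vecMulVec
  obtain ⟨m, v, rfl⟩ := Matrix.posSemidef_iff_eq_sum_vecMulVec.1 hσ.1
  refine ⟨m, fun p => shiftKraus ω (v p.1) p.2, ⟨?_, fun D _ hD p =>
    Matrix.isDiag_mul_mul_conjTranspose (shiftKraus_mul_star_eq_zero _ _ _) hD⟩, ?_⟩
  · have htr := hσ.2
    simp only [Matrix.trace_sum, Matrix.trace_vecMulVec_star] at htr
    simp only [Fintype.sum_prod_type, sum_conjTranspose_mul_shiftKraus _ hω, ← sum_smul, htr,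
      one_smul]
  · simp only [Fintype.sum_prod_type, Matrix.mul_smul, Matrix.smul_mul, ← smul_sum,
      sum_shiftKraus_mul_vecMulVec_mul_conjTranspose _ hω, smul_smul,
      inv_mul_cancel₀ (Nat.cast_ne_zero.2 (NeZero.ne d) : (d : ℂ) ≠ 0), one_smul]

theorem common_maximizers_eq_SMCS_general
    {d : ℕ} (ρ : Matrix (Fin d) (Fin d) ℂ) (hρ : IsDensityMatrix ρ) :
    (∀ C : Matrix (Fin d) (Fin d) ℂ → ℝ, IsValidCoherenceMeasure C →
      ∀ σ, IsDensityMatrix σ → C σ ≤ C ρ) ↔ InSMCS ρ := by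
  refine ⟨fun hmax => ?_, fun hSMCS C hC σ hσ => ?_⟩
  · have : NeZero d := hρ.neZero
    obtain ⟨σ, hσ⟩ := exists_inSMCS (d := d)
    refine hρ.inSMCS_of_l1Coherence_eq (le_antisymm hρ.l1Coherence_le ?_)
    rw [← hσ.l1Coherence_eq]
    exact hmax _ isValidCoherenceMeasure_l1Coherence σ hσ.isDensityMatrix
  · obtain ⟨m, K, hK, rfl⟩ := hSMCS.exists_isIncoherentKraus hσ
    exact hC.apply_le_of_isIncoherentKraus hρ hK

/-- the common maximizers of all valid coherence measures are exactly
the states of S_MCS. -/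
theorem common_maximizers_eq_SMCS
    {d : ℕ} (hd : 1 ≤ d) (ρ : Matrix (Fin d) (Fin d) ℂ) (hρ : IsDensityMatrix ρ) :
    (∀ C : Matrix (Fin d) (Fin d) ℂ → ℝ, IsValidCoherenceMeasure C →
      ∀ σ, IsDensityMatrix σ → C σ ≤ C ρ) ↔ InSMCS ρ :=
  common_maximizers_eq_SMCS_general ρ hρ
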